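/- arXiv:1701.07807 — 3 statements merged into one kernel-verified Lean document; each statement's English description precedes it below -/
import Mathlib

section
/- Let F be a field of characteristic not 2, and let u₀, u₁, u₂, u₃, u₄, u₅ ∈ F^{1×6} be the rows of an invertible 6×6 matrix over F. Set u₆ = u₁ + u₂, u₉ = u₃ + 2u₄. Let x, y ∈ F^{6×1} be indeterminate vectors. Then the 8 linear functionals on (x, y) ∈ F^{12} given by u₀x, u₆x, u₀y, u₉y, u₁(x+y), u₃(x+y), u₂(x+2y), u₄(x+2y) are linearly independent. -/
open Matrix

/-- Let `u₀,…,u₅` be the rows of an invertible 6×6 matrix over a field of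
characteristic not 2, `u₆ = u₁ + u₂`, `u₉ = u₃ + 2u₄`. The 8 linear functionals
`(x,y) ↦ u₀x, u₆x, u₀y, u₉y, u₁(x+y), u₃(x+y), u₂(x+2y), u₄(x+2y)` on `F¹²`,
identified with their coefficient vectors in `F⁶ × F⁶`, are linearly independent. -/
theorem stmt6 (F : Type*) [Field F] (h2 : (2 : F) ≠ 0)
    (S : Matrix (Fin 6) (Fin 6) F) (hS : IsUnit S) :
    LinearIndependent F
      (![(S 0, 0), (S 1 + S 2, 0), (0, S 0), (0, S 3 + (2 : F) • S 4),
         (S 1, S 1), (S 3, S 3), (S 2, (2 : F) • S 2), (S 4, (2 : F) • S 4)] :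
        Fin 8 → (Fin 6 → F) × (Fin 6 → F)) := by
  have hrows : LinearIndependent F (fun i ↦ S i) :=
    Matrix.linearIndependent_rows_iff_isUnit.mpr hS
  rw [Fintype.linearIndependent_iff] at hrows ⊢
  intro g hg
  rw [Fin.sum_univ_eight] at hg
  have h1 : g 0 • S 0 + g 1 • (S 1 + S 2) + g 2 • (0 : Fin 6 → F) + g 3 • (0 : Fin 6 → F)
      + g 4 • S 1 + g 5 • S 3 + g 6 • S 2 + g 7 • S 4 = 0 := congrArg Prod.fst hg
  have hb : g 0 • (0 : Fin 6 → F) + g 1 • (0 : Fin 6 → F) + g 2 • S 0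
      + g 3 • (S 3 + (2 : F) • S 4) + g 4 • S 1 + g 5 • S 3 + g 6 • ((2 : F) • S 2)
      + g 7 • ((2 : F) • S 4) = 0 := congrArg Prod.snd hg
  have e1 := hrows ![g 0, g 1 + g 4, g 1 + g 6, g 5, g 7, 0] (by
    rw [Fin.sum_univ_six]
    show g 0 • S 0 + (g 1 + g 4) • S 1 + (g 1 + g 6) • S 2 + g 5 • S 3 + g 7 • S 4
      + (0 : F) • S 5 = 0
    rw [← h1]; module)
  have e2 := hrows ![g 2, g 4, 2 * g 6, g 3 + g 5, 2 * g 3 + 2 * g 7, 0] (by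
    rw [Fin.sum_univ_six]
    show g 2 • S 0 + g 4 • S 1 + ((2 : F) * g 6) • S 2 + (g 3 + g 5) • S 3
      + ((2 : F) * g 3 + (2 : F) * g 7) • S 4 + (0 : F) • S 5 = 0
    rw [← hb]; module)
  have h0 : g 0 = 0 := e1 0
  have h14 : g 1 + g 4 = 0 := e1 1
  have h16 : g 1 + g 6 = 0 := e1 2
  have h5 : g 5 = 0 := e1 3
  have h7 : g 7 = 0 := e1 4
  have hg2 : g 2 = 0 := e2 0
  have hg4 : g 4 = 0 := e2 1
  have h35 : g 3 + g 5 = 0 := e2 3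
  intro i
  fin_cases i
  · exact h0
  · show g 1 = 0; linear_combination h14 - hg4
  · exact hg2
  · show g 3 = 0; linear_combination h35 - h5
  · exact hg4
  · exact h5
  · show g 6 = 0; linear_combination h16 - h14 + hg4
  · exact h7
end

section
/- Define a sequence c : ℕ → ℝ by c(1) = 1 and 1/c(K) = 1 + (3/8)·(1/c(K-1)) + (1 - (2/3)^{K-1})·(3/4) for K ≥ 2. Then c(K) is decreasing, bounded below by 5/14, and converges to 5/14 as K → ∞. -/
/-!
Writing `x K = 1 / c K`, the recursion is affine in `x`:
`x (K+1) = 7/4 + 3/8 · x K - 3/4 · (2/3)^K`. Solving it gives the closed form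
`x (n+1) = 14/5 - 3/35 · (3/8)^n - 12/7 · (2/3)^n`, which increases to the fixed point `14/5`;
hence `c` decreases to `5/14`.
-/

open Filter

noncomputable def invCapacityBound (n : ℕ) : ℝ :=
  14 / 5 - 3 / 35 * (3 / 8 : ℝ) ^ n - 12 / 7 * (2 / 3 : ℝ) ^ n

namespace invCapacityBound

lemma zero : invCapacityBound 0 = 1 := by
  norm_num [invCapacityBound]

lemma succ (n : ℕ) :
    invCapacityBound (n + 1) =
      1 + 3 / 8 * invCapacityBound n + (1 - (2 / 3 : ℝ) ^ (n + 1)) * (3 / 4) := by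
  simp only [invCapacityBound, pow_succ]
  ring

lemma le_fourteen_fifths (n : ℕ) : invCapacityBound n ≤ 14 / 5 := by
  have : 0 < (3 / 8 : ℝ) ^ n := by positivity
  have : 0 < (2 / 3 : ℝ) ^ n := by positivity
  unfold invCapacityBound
  linarith

lemma monotone : Monotone invCapacityBound := by
  refine monotone_nat_of_le_succ fun n => ?_
  have : 0 < (3 / 8 : ℝ) ^ n := by positivity
  have : 0 < (2 / 3 : ℝ) ^ n := by positivity
  simp only [invCapacityBound, pow_succ]
  linarith

lemma pos (n : ℕ) : 0 < invCapacityBound n := by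
  linarith [zero, monotone (Nat.zero_le n)]

lemma tendsto : Tendsto invCapacityBound atTop (nhds (14 / 5)) := by
  have h38 := tendsto_pow_atTop_nhds_zero_of_lt_one (r := (3 / 8 : ℝ)) (by norm_num) (by norm_num)
  have h23 := tendsto_pow_atTop_nhds_zero_of_lt_one (r := (2 / 3 : ℝ)) (by norm_num) (by norm_num)
  unfold invCapacityBound
  simpa using (tendsto_const_nhds (x := (14 / 5 : ℝ))).sub (h38.const_mul (3 / 35))
    |>.sub (h23.const_mul (12 / 7))

end invCapacityBound

/-- The recursive capacity outer bound of Theorem 4 for `(K,4,2,2)` is decreasing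
in `K`, bounded below by `5/14`, and converges to `5/14` as `K → ∞`. -/
theorem stmt12 (c : ℕ → ℝ) (h1 : c 1 = 1)
    (hrec : ∀ K : ℕ, 2 ≤ K →
      1 / c K = 1 + 3 / 8 * (1 / c (K - 1)) + (1 - (2 / 3 : ℝ) ^ (K - 1)) * (3 / 4)) :
    (∀ K : ℕ, 1 ≤ K → c (K + 1) ≤ c K) ∧
    (∀ K : ℕ, 1 ≤ K → 5 / 14 ≤ c K) ∧
    Tendsto c atTop (nhds (5 / 14)) := by
  have inv_eq : ∀ n, 1 / c (n + 1) = invCapacityBound n := by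
    intro n
    induction n with
    | zero => simp [h1, invCapacityBound.zero]
    | succ n ih => rw [invCapacityBound.succ, ← ih, hrec (n + 2) (by omega)]; rfl
  have closed_form : ∀ n, c (n + 1) = 1 / invCapacityBound n := fun n => by
    rw [← inv_eq, one_div_one_div]
  refine ⟨fun K hK => ?_, fun K hK => ?_, ?_⟩
  · obtain ⟨n, rfl⟩ := Nat.exists_eq_add_of_le' hK
    rw [closed_form, closed_form]
    exact one_div_le_one_div_of_le (invCapacityBound.pos n) (invCapacityBound.monotone n.le_succ)
  · obtain ⟨n, rfl⟩ := Nat.exists_eq_add_of_le' hK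
    rw [closed_form, show (5 / 14 : ℝ) = 1 / (14 / 5) by norm_num]
    exact one_div_le_one_div_of_le (invCapacityBound.pos n) (invCapacityBound.le_fourteen_fifths n)
  · rw [← tendsto_add_atTop_iff_nat 1, funext closed_form, show (5 / 14 : ℝ) = 1 / (14 / 5) by norm_num]
    exact tendsto_const_nhds.div invCapacityBound.tendsto (by norm_num)
end

section
/- Let N, T, K_c be positive integers with T < N < T + K_c, and let c : ℕ → ℝ₊ satisfy c(1) = 1 and 1/c(K) ≥ 1 + ((N-T)/N)·(1/c(K-1)) + (K-1)·(1 - (N-T)/K_c) for all K ≥ 2. Then for all K ≥ 2, c(K) ≤ K_c / ((K-1)(K_c - N + T)); in particular K·c(K) is bounded, so c(K) = O(1/K). -/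
/-- Theorem 5: for MDS-TPIR with `N < T + K_c`, the recursive capacity outer
bound forces `c(K) ≤ K_c/((K-1)(K_c - N + T))` for `K ≥ 2`; in particular
`K·c(K)` is bounded, so `c(K) = O(1/K)`. -/
theorem stmt13 (N T Kc : ℕ) (hT : 0 < T) (hKc : 0 < Kc) (hTN : T < N)
    (hN : N < T + Kc) (c : ℕ → ℝ) (hpos : ∀ K : ℕ, 1 ≤ K → 0 < c K)
    (h1 : c 1 = 1)
    (hrec : ∀ K : ℕ, 2 ≤ K →
      1 / c K ≥ 1 + (((N : ℝ) - T) / N) * (1 / c (K - 1)) +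
        ((K : ℝ) - 1) * (1 - ((N : ℝ) - T) / Kc)) :
    (∀ K : ℕ, 2 ≤ K →
      c K ≤ (Kc : ℝ) / (((K : ℝ) - 1) * ((Kc : ℝ) - N + T))) ∧
    ∃ B : ℝ, ∀ K : ℕ, 1 ≤ K → (K : ℝ) * c K ≤ B := by
  have hNlt : (N : ℝ) < T + Kc := by exact_mod_cast hN
  have hd : (0:ℝ) < (Kc:ℝ) - N + T := by linarith
  have hTNr : (T:ℝ) < N := by exact_mod_cast hTN
  have hT0 : (0:ℝ) ≤ T := Nat.cast_nonneg T
  have hNpos : (0:ℝ) < N := lt_of_le_of_lt hT0 hTNr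
  have hKcpos : (0:ℝ) < Kc := by exact_mod_cast hKc
  have key : ∀ K : ℕ, 2 ≤ K →
      c K ≤ (Kc : ℝ) / (((K : ℝ) - 1) * ((Kc : ℝ) - N + T)) := by
    intro K hK
    have hKr : (1:ℝ) ≤ (K:ℝ) - 1 := by
      have : (2:ℝ) ≤ K := by exact_mod_cast hK
      linarith
    have hcK : 0 < c K := hpos K (by omega)
    have hcK1 : 0 < c (K-1) := hpos (K-1) (by omega)
    have ha : 0 ≤ (((N:ℝ)-T)/N) * (1 / c (K-1)) := by
      apply mul_nonneg (div_nonneg (by linarith) hNpos.le)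
      positivity
    have hrecK := hrec K hK
    have hterm2 : (1 - ((N:ℝ)-T)/Kc) = ((Kc:ℝ)-N+T)/Kc := by
      field_simp
      ring
    have hterm : ((K:ℝ)-1) * (1 - ((N:ℝ)-T)/Kc)
        = ((K:ℝ)-1) * (((Kc:ℝ)-N+T)/Kc) := by rw [hterm2]
    have hlow : (((K:ℝ)-1) * (((Kc:ℝ)-N+T)/Kc)) ≤ 1 / c K := by
      rw [← hterm]; linarith
    have h2 : c K * (((K:ℝ)-1) * (((Kc:ℝ)-N+T)/Kc)) ≤ 1 := by
      have := mul_le_mul_of_nonneg_left hlow hcK.le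
      rwa [mul_one_div, div_self hcK.ne'] at this
    rw [le_div_iff₀ (mul_pos (lt_of_lt_of_le one_pos hKr) hd)]
    have h3 := mul_le_mul_of_nonneg_right h2 hKcpos.le
    have heq : c K * (((K:ℝ)-1) * (((Kc:ℝ)-N+T)/Kc)) * Kc
        = c K * (((K:ℝ)-1) * ((Kc:ℝ)-N+T)) := by
      field_simp
    rw [heq, one_mul] at h3
    exact h3
  refine ⟨key, ⟨max 1 (2*Kc/((Kc:ℝ)-N+T)), ?_⟩⟩
  intro K hK
  rcases eq_or_lt_of_le hK with h | h
  · simp [← h, h1]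
  · have hK2 : 2 ≤ K := h
    have hKr : (1:ℝ) ≤ (K:ℝ) - 1 := by
      have : (2:ℝ) ≤ K := by exact_mod_cast hK2
      linarith
    have hKpos : (0:ℝ) < K := by linarith
    have h4 : (K:ℝ) * c K ≤ (K:ℝ) * ((Kc:ℝ) / (((K:ℝ)-1) * ((Kc:ℝ)-N+T))) :=
      mul_le_mul_of_nonneg_left (key K hK2) hKpos.le
    have h5 : (K:ℝ) * ((Kc:ℝ) / (((K:ℝ)-1) * ((Kc:ℝ)-N+T)))
        ≤ 2*Kc/((Kc:ℝ)-N+T) := by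
      rw [mul_div_assoc', div_le_div_iff₀ (mul_pos (by linarith) hd) hd]
      have hnn : (0:ℝ) ≤ ((K:ℝ)-2) * Kc * ((Kc:ℝ)-N+T) :=
        mul_nonneg (mul_nonneg (by linarith) hKcpos.le) hd.le
      nlinarith [hnn]
    exact le_trans (le_trans h4 h5) (le_max_right _ _)
end
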